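/- arXiv:1911.02489 — 3 statements merged into one kernel-verified Lean document; each statement's English description precedes it below -/
import Mathlib

section
/- Let β > 1 and K > 0. Suppose u : (0,∞) → ℝ is a C² function which is nonincreasing (u' ≤ 0), convex (u'' ≥ 0), satisfies K·u''(t) = (-u'(t))^β for all t > 0, and u(t) → +∞ as t → 0⁺. Then u' is never zero, and for all t > 0, -u'(t) = (K / ((β-1)·t))^{1/(β-1)}. -/
open Set Filter

lemma constOn_of_hasDerivAt_zero {f : ℝ → ℝ} {D : Set ℝ} (hD : Convex ℝ D) (hDo : IsOpen D)
    (h : ∀ x ∈ D, HasDerivAt f 0 x) : ∀ x ∈ D, ∀ y ∈ D, f x = f y := by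
  have hc : ContinuousOn f D := fun x hx => ((h x hx).continuousAt).continuousWithinAt
  have hd : DifferentiableOn ℝ f (interior D) := by
    rw [hDo.interior_eq]; exact fun x hx => (h x hx).differentiableAt.differentiableWithinAt
  have hm := monotoneOn_of_deriv_nonneg hD hc hd
    (by rw [hDo.interior_eq]; intro x hx; exact ((h x hx).deriv).ge)
  have ha := antitoneOn_of_deriv_nonpos hD hc hd
    (by rw [hDo.interior_eq]; intro x hx; exact ((h x hx).deriv).le)
  intro x hx y hy
  rcases le_total x y with hxy | hxy
  · exact le_antisymm (hm hx hy hxy) (ha hx hy hxy)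
  · exact (le_antisymm (hm hy hx hxy) (ha hy hx hxy)).symm

/-- Integration of the ODE `K u'' = (-u')^β` for a nonincreasing convex solution
blowing up at `0⁺`: the derivative never vanishes and
`-u'(t) = (K/((β-1)t))^{1/(β-1)}`. -/
theorem ode_first_integral (β K : ℝ) (hβ : 1 < β) (hK : 0 < K) (u : ℝ → ℝ)
    (hreg : ContDiffOn ℝ 2 u (Set.Ioi 0))
    (hmono : ∀ t : ℝ, 0 < t → deriv u t ≤ 0)
    (hconv : ∀ t : ℝ, 0 < t → 0 ≤ iteratedDeriv 2 u t)
    (hode : ∀ t : ℝ, 0 < t → K * iteratedDeriv 2 u t = (-deriv u t) ^ β)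
    (hblow : Filter.Tendsto u (nhdsWithin 0 (Set.Ioi 0)) Filter.atTop) :
    ∀ t : ℝ, 0 < t →
      deriv u t ≠ 0 ∧ -deriv u t = (K / ((β - 1) * t)) ^ (1 / (β - 1)) := by
  have hβ1 : (0:ℝ) < β - 1 := by linarith
  have hβ0 : β - 1 ≠ 0 := ne_of_gt hβ1
  set p : ℝ → ℝ := fun s => -deriv u s with hp_def
  -- regularity
  have hreg' : ContDiffOn ℝ ((1:WithTop ℕ∞)+1) u (Set.Ioi 0) := by
    rw [show ((1:WithTop ℕ∞)+1) = 2 by norm_num]; exact hreg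
  obtain ⟨hd1, -, hcd1⟩ := (contDiffOn_succ_iff_deriv_of_isOpen isOpen_Ioi).mp hreg'
  have hudiff : ∀ s : ℝ, 0 < s → DifferentiableAt ℝ u s := fun s hs =>
    hd1.differentiableAt (isOpen_Ioi.mem_nhds hs)
  have hdudiff : ∀ s : ℝ, 0 < s → DifferentiableAt ℝ (deriv u) s := fun s hs =>
    (hcd1.differentiableOn one_ne_zero).differentiableAt (isOpen_Ioi.mem_nhds hs)
  have hitd : iteratedDeriv 2 u = deriv (deriv u) := by
    rw [show (2:ℕ) = 1 + 1 from rfl, iteratedDeriv_succ, iteratedDeriv_one]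
  -- p nonneg
  have hp0 : ∀ s : ℝ, 0 < s → 0 ≤ p s := fun s hs => neg_nonneg.2 (hmono s hs)
  -- derivative of p
  have hpd : ∀ s : ℝ, 0 < s → HasDerivAt p (-(p s ^ β / K)) s := by
    intro s hs
    have h2 : HasDerivAt (deriv u) (deriv (deriv u) s) s := (hdudiff s hs).hasDerivAt
    have h3 : deriv (deriv u) s = p s ^ β / K := by
      have h4 := hode s hs
      rw [hitd] at h4
      field_simp
      linarith [h4]
    have h5 := h2.neg
    rw [h3] at h5
    exact h5
  -- p antitone
  have hpant : AntitoneOn p (Ioi 0) := by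
    apply antitoneOn_of_deriv_nonpos (convex_Ioi 0)
    · exact fun x hx => (hpd x hx).continuousAt.continuousWithinAt
    · rw [interior_Ioi]
      exact fun x hx => (hpd x hx).differentiableAt.differentiableWithinAt
    · rw [interior_Ioi]
      intro x hx
      rw [(hpd x hx).deriv]
      have h6 : (0:ℝ) ≤ p x ^ β := Real.rpow_nonneg (hp0 x hx) β
      have : 0 ≤ p x ^ β / K := div_nonneg h6 hK.le
      linarith
  -- boundedness lemma
  have hbound : ∀ M : ℝ, 0 ≤ M → ∀ t₀ : ℝ, 0 < t₀ →
      (∀ s ∈ Ioc (0:ℝ) t₀, p s ≤ M) → False := by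
    intro M hM t₀ ht₀ hple
    have hg : MonotoneOn (fun s => u s + M * s) (Ioc 0 t₀) := by
      apply monotoneOn_of_deriv_nonneg (convex_Ioc 0 t₀)
      · intro x hx
        exact ((hudiff x hx.1).continuousAt.add (by fun_prop)).continuousWithinAt
      · rw [interior_Ioc]
        intro x hx
        exact (((hudiff x hx.1).hasDerivAt.add
          ((hasDerivAt_id x).const_mul M)).differentiableAt).differentiableWithinAt
      · rw [interior_Ioc]
        intro x hx
        have hder : HasDerivAt (fun s => u s + M * s) (deriv u x + M * 1) x :=
          (hudiff x hx.1).hasDerivAt.add ((hasDerivAt_id x).const_mul M)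
        rw [hder.deriv]
        have := hple x ⟨hx.1, hx.2.le⟩
        simp only [hp_def] at this
        linarith
    have hub : ∀ s ∈ Ioc (0:ℝ) t₀, u s ≤ u t₀ + M * t₀ := by
      intro s hs
      have h7 : u s + M * s ≤ u t₀ + M * t₀ := hg hs (right_mem_Ioc.mpr ht₀) hs.2
      nlinarith [mul_nonneg hM hs.1.le]
    have h1 : ∀ᶠ s in nhdsWithin (0:ℝ) (Ioi 0), u t₀ + M * t₀ < u s :=
      hblow.eventually (eventually_gt_atTop _)
    have h2 : Ioc (0:ℝ) t₀ ∈ nhdsWithin (0:ℝ) (Ioi 0) :=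
      Ioc_mem_nhdsGT_of_mem ⟨le_refl 0, ht₀⟩
    obtain ⟨s, hs1, hs2⟩ := (h1.and h2).exists
    exact absurd (hub s hs2) (not_le.mpr hs1)
  -- some point with p > 0
  obtain ⟨a, ha0, hpa⟩ : ∃ a : ℝ, 0 < a ∧ 0 < p a := by
    by_contra h
    push_neg at h
    exact hbound 0 le_rfl 1 one_pos (fun s hs => h s hs.1)
  -- derivative of q = p ^ (1-β)
  have hq : ∀ s : ℝ, 0 < s → 0 < p s →
      HasDerivAt (fun x => p x ^ (1 - β)) ((β - 1) / K) s := by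
    intro s hs hps
    have h1 := (Real.hasDerivAt_rpow_const (x := p s) (p := 1 - β)
      (Or.inl (ne_of_gt hps))).comp s (hpd s hs)
    refine h1.congr_deriv ?_
    have h2 : p s ^ (-β) * p s ^ β = 1 := by
      rw [← Real.rpow_add hps]
      simp
    rw [show (1:ℝ) - β - 1 = -β by ring]
    have h3 : (1 - β) * p s ^ (-β) * -(p s ^ β / K) = (β - 1) * (p s ^ (-β) * p s ^ β) / K := by
      ring
    rw [h3, h2, mul_one]
  -- f has deriv zero where p > 0
  set f : ℝ → ℝ := fun y => p y ^ (1 - β) - (β - 1) / K * y with hf_def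
  have hfd : ∀ x : ℝ, 0 < x → 0 < p x → HasDerivAt f 0 x := by
    intro x hx hpx
    have h1 : HasDerivAt f ((β - 1) / K - (β - 1) / K * 1) x := (hq x hx hpx).sub ((hasDerivAt_id x).const_mul ((β - 1) / K))
    simpa using h1
  -- positivity everywhere
  have hppos : ∀ s : ℝ, 0 < s → 0 < p s := by
    intro s hs
    rcases (hp0 s hs).lt_or_eq with h | h
    · exact h
    exfalso
    have hps0 : p s = 0 := h.symm
    have hsa : a ≤ s := by
      by_contra hc
      push_neg at hc
      have := hpant (mem_Ioi.2 hs) (mem_Ioi.2 ha0) hc.le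
      linarith
    set S := {x : ℝ | x ∈ Icc a s ∧ p x = 0} with hS_def
    have hSclosed : IsClosed S := by
      have hcont : ContinuousOn p (Icc a s) := fun x hx =>
        (hpd x (lt_of_lt_of_le ha0 hx.1)).continuousAt.continuousWithinAt
      have := hcont.preimage_isClosed_of_isClosed isClosed_Icc (isClosed_singleton (x := (0:ℝ)))
      convert this using 1
      rfl
    have hsS : s ∈ S := ⟨⟨hsa, le_rfl⟩, hps0⟩
    have hbdd : BddBelow S := ⟨a, fun x hx => hx.1.1⟩
    set T := sInf S with hT_def
    have hTS : T ∈ S := hSclosed.csInf_mem ⟨s, hsS⟩ hbdd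
    have hT0 : 0 < T := lt_of_lt_of_le ha0 hTS.1.1
    have haT : a < T := by
      rcases hTS.1.1.lt_or_eq with h' | h'
      · exact h'
      · exfalso; rw [← h'] at hTS; linarith [hTS.2]
    have hppos' : ∀ x ∈ Ioo (0:ℝ) T, 0 < p x := by
      intro x hx
      rcases lt_or_ge x a with h' | h'
      · exact lt_of_lt_of_le hpa (hpant (mem_Ioi.2 hx.1) (mem_Ioi.2 ha0) h'.le)
      · rcases (hp0 x hx.1).lt_or_eq with h'' | h''
        · exact h''
        · exfalso
          have hxS : x ∈ S := ⟨⟨h', hx.2.le.trans hTS.1.2⟩, h''.symm⟩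
          exact absurd (csInf_le hbdd hxS) (not_le.mpr hx.2)
    -- f constant on Ioo 0 T
    have hconst := constOn_of_hasDerivAt_zero (convex_Ioo 0 T) isOpen_Ioo
      (fun x hx => hfd x hx.1 (hppos' x hx))
    have haIoo : a ∈ Ioo (0:ℝ) T := ⟨ha0, haT⟩
    set Qm := p a ^ (1 - β) + (β - 1) / K * (T - a) with hQm_def
    have hQmpos : 0 < Qm := by
      have h1 := Real.rpow_pos_of_pos hpa (1 - β)
      have h2 : 0 ≤ (β - 1) / K * (T - a) :=
        mul_nonneg (div_nonneg hβ1.le hK.le) (by linarith)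
      simp only [hQm_def]; linarith
    have hQm : ∀ x ∈ Ioo (0:ℝ) T, p x ^ (1 - β) ≤ Qm := by
      intro x hx
      have h1 := hconst x hx a haIoo
      simp only [hf_def] at h1
      have h2 : (β - 1) / K * (T - x) ≥ 0 :=
        mul_nonneg (div_nonneg hβ1.le hK.le) (by linarith [hx.2])
      simp only [hQm_def]; linarith
    set ε := Qm ^ (1 / (1 - β)) with hε_def
    have hεpos : 0 < ε := Real.rpow_pos_of_pos hQmpos _
    have hεle : ∀ x ∈ Ioo (0:ℝ) T, ε ≤ p x := by
      intro x hx
      have hpx := hppos' x hx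
      have hA : (0:ℝ) < p x ^ (1 - β) := Real.rpow_pos_of_pos hpx _
      have hz : (1:ℝ) / (1 - β) ≤ 0 := by
        apply div_nonpos_of_nonneg_of_nonpos <;> linarith
      have h1 := Real.rpow_le_rpow_of_nonpos hA (hQm x hx) hz
      have h2 : (p x ^ (1 - β)) ^ (1 / (1 - β)) = p x := by
        rw [← Real.rpow_mul hpx.le, mul_one_div_cancel (by linarith : (1:ℝ) - β ≠ 0),
          Real.rpow_one]
      rw [h2] at h1
      exact h1
    have htend : Filter.Tendsto p (nhdsWithin T (Iio T)) (nhds (p T)) :=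
      ((hpd T hT0).continuousAt.continuousWithinAt : ContinuousWithinAt p (Iio T) T)
    have hev : ∀ᶠ x in nhdsWithin T (Iio T), ε ≤ p x := by
      filter_upwards [Ioo_mem_nhdsLT_of_mem (⟨hT0, le_rfl⟩ : T ∈ Ioc (0:ℝ) T)] with x hx
      exact hεle x hx
    have := ge_of_tendsto htend hev
    rw [hTS.2] at this
    linarith
  -- constancy on Ioi 0
  have hconst := constOn_of_hasDerivAt_zero (convex_Ioi 0) isOpen_Ioi
    (fun x hx => hfd x hx (hppos x hx))
  intro t ht
  have hpt := hppos t ht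
  constructor
  · intro h; simp only [hp_def, h, neg_zero] at hpt; exact lt_irrefl 0 hpt
  -- determine the constant
  obtain ⟨C, hfC⟩ : ∃ C : ℝ, ∀ x : ℝ, 0 < x → f x = C :=
    ⟨f t, fun x hx => hconst x hx t ht⟩
  have hC0 : 0 ≤ C := by
    by_contra hC
    push_neg at hC
    set x₀ : ℝ := -C * K / (2 * (β - 1)) with hx₀_def
    have hx₀pos : 0 < x₀ := by
      apply div_pos (by nlinarith) (by linarith)
    have h1 := hfC x₀ hx₀pos
    simp only [hf_def] at h1
    have h2 : p x₀ ^ (1 - β) = C + (β - 1) / K * x₀ := by linarith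
    have h3 : (β - 1) / K * x₀ = -C / 2 := by
      rw [hx₀_def]
      field_simp
    have h4 := Real.rpow_pos_of_pos (hppos x₀ hx₀pos) (1 - β)
    rw [h2, h3] at h4
    linarith
  have hCnotpos : ¬(0 < C) := by
    intro hC
    set M : ℝ := C ^ (1 / (1 - β)) with hM_def
    have hMpos : 0 < M := Real.rpow_pos_of_pos hC _
    apply hbound M hMpos.le t ht
    intro x hx
    have h1 := hfC x hx.1
    simp only [hf_def] at h1
    have h2 : C ≤ p x ^ (1 - β) := by
      have : (β - 1) / K * x ≥ 0 := mul_nonneg (div_nonneg hβ1.le hK.le) hx.1.le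
      linarith
    have hz : (1:ℝ) / (1 - β) ≤ 0 := by
      apply div_nonpos_of_nonneg_of_nonpos <;> linarith
    have h3 := Real.rpow_le_rpow_of_nonpos hC h2 hz
    have h4 : (p x ^ (1 - β)) ^ (1 / (1 - β)) = p x := by
      rw [← Real.rpow_mul (hppos x hx.1).le,
        mul_one_div_cancel (by linarith : (1:ℝ) - β ≠ 0), Real.rpow_one]
    rw [h4] at h3
    exact h3
  have hCeq : C = 0 := le_antisymm (not_lt.mp hCnotpos) hC0
  -- final formula
  have h1 := hfC t ht
  simp only [hf_def, hCeq] at h1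
  have h2 : p t ^ (1 - β) = (β - 1) * t / K := by
    rw [sub_eq_zero] at h1
    rw [h1]
    ring
  have h3 : p t = ((β - 1) * t / K) ^ (1 / (1 - β)) := by
    rw [← h2, ← Real.rpow_mul hpt.le,
      mul_one_div_cancel (by linarith : (1:ℝ) - β ≠ 0), Real.rpow_one]
  have hbase : 0 < (β - 1) * t / K := div_pos (mul_pos hβ1 ht) hK
  have h5 : ((β - 1) * t / K) ^ (1 / (1 - β)) = (K / ((β - 1) * t)) ^ (1 / (β - 1)) := by
    have he : (1:ℝ) / (1 - β) = -(1 / (β - 1)) := by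
      rw [show (1:ℝ) - β = -(β - 1) by ring, div_neg]
    rw [he, Real.rpow_neg hbase.le, ← Real.inv_rpow hbase.le, inv_div]
  show p t = _
  rw [h3, h5]
end

section
/- Let β > 1, K > 0, and suppose u : (0,∞) → ℝ is C², nonincreasing, convex, solves K·u'' = (-u')^β on (0,∞), and u(t) → +∞ as t → 0⁺. If 1 < β < 2, then there exists c ∈ ℝ such that u(t) = (1/(2-β))·(K^{1/(2-β)} / ((β-1)·t))^{(2-β)/(β-1)} + c for all t > 0. If β = 2, then there exists c ∈ ℝ such that u(t) = -K·log t + c. -/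
/-- Two positive reals with equal logs are equal. -/
lemma ode_aux_eq_of_log_eq {a b : ℝ} (ha : 0 < a) (hb : 0 < b)
    (h : Real.log a = Real.log b) : a = b := by
  rw [← Real.exp_log ha, ← Real.exp_log hb, h]

/-- rpow base injectivity for nonzero exponent. -/
lemma ode_aux_rpow_base_inj {x y c : ℝ} (hx : 0 < x) (hy : 0 < y) (hc : c ≠ 0)
    (h : x ^ c = y ^ c) : x = y := by
  have := congrArg (fun z : ℝ => z ^ (1/c)) h
  simpa [← Real.rpow_mul hx.le, ← Real.rpow_mul hy.le, mul_one_div, div_self hc, mul_inv_cancel₀ hc] using this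

/-- Functions with zero derivative on an interval are constant. -/
lemma ode_aux_const {f : ℝ → ℝ} {a b : ℝ} (hab : a ≤ b)
    (h : ∀ t ∈ Set.Icc a b, HasDerivAt f 0 t) : f b = f a := by
  have hc : ContinuousOn f (Set.Icc a b) := fun t ht =>
    ((h t ht).continuousAt).continuousWithinAt
  exact constant_of_has_deriv_right_zero hc
    (fun x hx => ((h x ⟨hx.1, hx.2.le⟩).hasDerivWithinAt.mono (fun y hy => hy))) b
    (Set.right_mem_Icc.2 hab)

lemma ode_aux_const_Ioi {f : ℝ → ℝ} (h : ∀ t, 0 < t → HasDerivAt f 0 t)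
    {a b : ℝ} (ha : 0 < a) (hb : 0 < b) : f a = f b := by
  rcases le_total a b with hab | hab
  · exact (ode_aux_const hab (fun t ht => h t (lt_of_lt_of_le ha ht.1))).symm
  · exact ode_aux_const hab (fun t ht => h t (lt_of_lt_of_le hb ht.1))


/-- Classification of nonincreasing convex solutions of `K u'' = (-u')^β` on
`(0,∞)` blowing up at `0⁺`: the explicit formula, for `1 < β < 2` and for `β = 2`. -/
theorem ode_classification (β K : ℝ) (hβ : 1 < β) (hβ2 : β ≤ 2) (hK : 0 < K) (u : ℝ → ℝ)
    (hreg : ContDiffOn ℝ 2 u (Set.Ioi 0))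
    (hmono : ∀ t : ℝ, 0 < t → deriv u t ≤ 0)
    (hconv : ∀ t : ℝ, 0 < t → 0 ≤ iteratedDeriv 2 u t)
    (hode : ∀ t : ℝ, 0 < t → K * iteratedDeriv 2 u t = (-deriv u t) ^ β)
    (hblow : Filter.Tendsto u (nhdsWithin 0 (Set.Ioi 0)) Filter.atTop) :
    (β < 2 → ∃ c : ℝ, ∀ t : ℝ, 0 < t →
      u t = (1 / (2 - β)) * (K ^ (1 / (2 - β)) / ((β - 1) * t)) ^ ((2 - β) / (β - 1)) + c) ∧
    (β = 2 → ∃ c : ℝ, ∀ t : ℝ, 0 < t → u t = -K * Real.log t + c) := by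

  set v : ℝ → ℝ := fun t => -deriv u t with hv_def
  have hv0 : ∀ t, 0 < t → 0 ≤ v t := fun t ht => neg_nonneg.2 (hmono t ht)
  have hder1 : ContDiffOn ℝ 1 (deriv u) (Set.Ioi 0) :=
    hreg.deriv_of_isOpen isOpen_Ioi (by norm_num)
  have hid2 : iteratedDeriv 2 u = deriv (deriv u) := by
    rw [iteratedDeriv_succ, iteratedDeriv_one]
  have hu_diff : ∀ t : ℝ, 0 < t → HasDerivAt u (deriv u t) t := by
    intro t ht
    exact (((hreg.contDiffAt (isOpen_Ioi.mem_nhds ht)).differentiableAt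
      (by norm_num)).hasDerivAt)
  have hdu_diff : ∀ t : ℝ, 0 < t → HasDerivAt (deriv u) (iteratedDeriv 2 u t) t := by
    intro t ht
    have := ((hder1.contDiffAt (isOpen_Ioi.mem_nhds ht)).differentiableAt
      (by norm_num)).hasDerivAt
    rwa [hid2]
  -- ODE for v
  have hvode : ∀ t : ℝ, 0 < t → HasDerivAt v (-(v t ^ β / K)) t := by
    intro t ht
    have h1 := (hdu_diff t ht).neg
    have h2 : iteratedDeriv 2 u t = v t ^ β / K := by
      field_simp
      rw [mul_comm]
      exact hode t ht
    rwa [h2] at h1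
  have hvcont : ContinuousOn v (Set.Ioi 0) := fun t ht =>
    ((hvode t ht).continuousAt).continuousWithinAt
  -- v is antitone on Ioi 0
  have hvanti : ∀ s t : ℝ, 0 < s → s ≤ t → v t ≤ v s := by
    have H : AntitoneOn v (Set.Ioi 0) := by
      apply antitoneOn_of_deriv_nonpos (convex_Ioi 0) hvcont
      · intro x hx
        rw [interior_Ioi] at hx
        exact ((hvode x hx).differentiableAt).differentiableWithinAt
      · intro x hx
        rw [interior_Ioi] at hx
        rw [(hvode x hx).deriv]
        have : 0 ≤ v x ^ β / K := div_nonneg (Real.rpow_nonneg (hv0 x hx) β) hK.le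
        linarith
    intro s t hs hst
    exact H hs (lt_of_lt_of_le hs hst) hst
  -- derivative of w = v^(1-β) where v > 0
  have hβ1 : (0:ℝ) < β - 1 := by linarith
  have hwderiv : ∀ t : ℝ, 0 < t → 0 < v t →
      HasDerivAt (fun s => v s ^ (1-β)) ((β-1)/K) t := by
    intro t ht hvt
    have h := (hvode t ht).rpow_const (p := 1-β) (Or.inl (ne_of_gt hvt))
    have he : (1:ℝ) - β - 1 = -β := by ring
    rw [he] at h
    have h1 : v t ^ (-β) * v t ^ β = 1 := by
      rw [← Real.rpow_add hvt]; norm_num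
    have hval : -(v t ^ β / K) * (1-β) * v t ^ (-β) = (β-1)/K := by
      rw [show -(v t ^ β / K) * (1-β) * v t ^ (-β) = (β-1)/K * (v t ^ (-β) * v t ^ β) by ring,
        h1, mul_one]
    rwa [hval] at h
  -- affine property of w on intervals of positivity
  have hwaffine : ∀ a b : ℝ, 0 < a → a ≤ b → (∀ x ∈ Set.Icc a b, 0 < v x) →
      v b ^ (1-β) - (β-1)/K*b = v a ^ (1-β) - (β-1)/K*a := by
    intro a b ha hab hpos
    have := ode_aux_const (f := fun t => v t ^ (1-β) - (β-1)/K * t) hab (fun t ht => by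
      have h2 := ((hwderiv t (lt_of_lt_of_le ha ht.1) (hpos t ht)).sub
        ((hasDerivAt_id t).const_mul ((β-1)/K)))
      simpa [Pi.sub_def] using h2)
    simpa using this
  -- v is positive everywhere
  have hvpos : ∀ t : ℝ, 0 < t → 0 < v t := by
    by_contra hcon
    push_neg at hcon
    obtain ⟨s, hs, hvs0⟩ := hcon
    have hvs : v s = 0 := le_antisymm hvs0 (hv0 s hs)
    -- v is not identically zero near 0 (else u constant, contradicting blow-up)
    have hnz : ∃ a : ℝ, 0 < a ∧ 0 < v a := by
      by_contra hall
      push_neg at hall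
      have hz : ∀ t : ℝ, 0 < t → v t = 0 := fun t ht => le_antisymm (hall t ht) (hv0 t ht)
      have huc : ∀ t : ℝ, 0 < t → u t = u 1 := by
        intro t ht
        exact ode_aux_const_Ioi (f := u) (fun x hx => by
          have hd := hu_diff x hx
          have : deriv u x = 0 := by
            have := hz x hx; simp only [hv_def] at this; linarith
          rwa [this] at hd) ht one_pos
      have h1 : ∀ᶠ x in nhdsWithin 0 (Set.Ioi 0), u x = u 1 :=
        eventually_mem_nhdsWithin.mono (fun x hx => huc x hx)
      have h2 : ∀ᶠ x in nhdsWithin 0 (Set.Ioi 0), u 1 + 1 ≤ u x :=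
        hblow.eventually_ge_atTop (u 1 + 1)
      obtain ⟨x, hx1, hx2⟩ := (h1.and h2).exists
      rw [hx1] at hx2; linarith
    obtain ⟨a, ha, hva⟩ := hnz
    have has : a < s := by
      by_contra hle
      push_neg at hle
      have := hvanti s a hs hle
      linarith
    -- T = first zero of v in [a, s]
    set Z := Set.Icc a s ∩ v ⁻¹' {0} with hZ_def
    have hZclosed : IsClosed Z :=
      (hvcont.mono (fun x hx => lt_of_lt_of_le ha hx.1)).preimage_isClosed_of_isClosed
        isClosed_Icc isClosed_singleton
    have hZne : Z.Nonempty := ⟨s, ⟨has.le, le_refl s⟩, hvs⟩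
    have hZbdd : BddBelow Z := ⟨a, fun x hx => hx.1.1⟩
    set T := sInf Z with hT_def
    have hTZ : T ∈ Z := hZclosed.csInf_mem hZne hZbdd
    have hvT : v T = 0 := hTZ.2
    have haT : a < T := by
      rcases lt_or_eq_of_le hTZ.1.1 with h | h
      · exact h
      · exfalso; rw [← h] at hvT; linarith
    have hTpos : 0 < T := lt_trans ha haT
    -- v > 0 on [a, T)
    have hposlt : ∀ x : ℝ, a ≤ x → x < T → 0 < v x := by
      intro x hax hxT
      rcases (hv0 x (lt_of_lt_of_le ha hax)).lt_or_eq with h | h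
      · exact h
      · exfalso
        have hxZ : x ∈ Z := ⟨⟨hax, le_trans hxT.le hTZ.1.2⟩, h.symm⟩
        exact absurd (csInf_le hZbdd hxZ) (not_le.2 hxT)
    -- bound on w on [a, T)
    set M := v a ^ (1-β) + (β-1)/K*T with hM_def
    have hMpos : 0 < M := by
      have h1 : 0 < v a ^ (1-β) := Real.rpow_pos_of_pos hva _
      have h2 : 0 ≤ (β-1)/K*T := mul_nonneg (div_nonneg hβ1.le hK.le) hTpos.le
      rw [hM_def]; linarith
    have hwbound : ∀ x : ℝ, a ≤ x → x < T → v x ^ (1-β) ≤ M := by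
      intro x hax hxT
      have := hwaffine a x ha hax (fun y hy => hposlt y hy.1 (lt_of_le_of_lt hy.2 hxT))
      have h1 : 0 < v a ^ (1-β) := Real.rpow_pos_of_pos hva _
      have h2 : (β-1)/K*x ≤ (β-1)/K*T :=
        mul_le_mul_of_nonneg_left hxT.le (div_nonneg hβ1.le hK.le)
      rw [hM_def]; nlinarith
    -- choose x near T with v x small
    set δ := (M+1) ^ (1/(1-β)) with hδ_def
    have hδpos : 0 < δ := Real.rpow_pos_of_pos (by linarith) _
    have hδpow : δ ^ (1-β) = M + 1 := by
      rw [hδ_def, ← Real.rpow_mul (by linarith : (0:ℝ) ≤ M+1), one_div,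
        inv_mul_cancel₀ (by linarith : (1:ℝ)-β ≠ 0), Real.rpow_one]
    have hvTcont : Filter.Tendsto v (nhds T) (nhds 0) := by
      have := (hvode T hTpos).continuousAt
      rw [ContinuousAt, hvT] at this
      exact this
    have hev1 : ∀ᶠ x in nhdsWithin T (Set.Ioo a T), v x < δ :=
      Filter.Eventually.filter_mono nhdsWithin_le_nhds
        (hvTcont.eventually_lt_const hδpos)
    have hev2 : ∀ᶠ x in nhdsWithin T (Set.Ioo a T), x ∈ Set.Ioo a T :=
      eventually_mem_nhdsWithin
    have hne : (nhdsWithin T (Set.Ioo a T)).NeBot := right_nhdsWithin_Ioo_neBot haT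
    obtain ⟨x, hx1, hx2⟩ := (hev1.and hev2).exists
    have hvx : 0 < v x := hposlt x hx2.1.le hx2.2
    have hgt : M + 1 < v x ^ (1-β) := by
      rw [← hδpow]
      exact Real.rpow_lt_rpow_of_neg hvx hx1 (by linarith)
    have hle := hwbound x hx2.1.le hx2.2
    linarith
  -- global affine law for w
  have hglobal : ∀ t : ℝ, 0 < t →
      v t ^ (1-β) - (β-1)/K*t = v 1 ^ (1-β) - (β-1)/K*1 := by
    intro t ht
    rcases le_total t 1 with h | h
    · exact (hwaffine t 1 ht h (fun x hx => hvpos x (lt_of_lt_of_le ht hx.1))).symm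
    · exact hwaffine 1 t one_pos h (fun x hx => hvpos x (lt_of_lt_of_le one_pos hx.1))
  set c₀ := v 1 ^ (1-β) - (β-1)/K*1 with hc0_def
  clear_value c₀
  have hc0_nonneg : 0 ≤ c₀ := by
    by_contra hneg
    push_neg at hneg
    set t₀ := -c₀ * K / (2*(β-1)) with ht0_def
    clear_value t₀
    have ht₀ : 0 < t₀ := by
      rw [ht0_def]
      exact div_pos (mul_pos (neg_pos.2 hneg) hK) (by linarith)
    have h1 := hglobal t₀ ht₀
    have h2 : (β-1)/K * t₀ = -c₀/2 := by
      rw [ht0_def]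
      field_simp
    have h3 : 0 < v t₀ ^ (1-β) := Real.rpow_pos_of_pos (hvpos t₀ ht₀) _
    rw [h2] at h1
    linarith
  have hc0_nonpos : c₀ ≤ 0 := by
    by_contra hpos
    push_neg at hpos
    set Mv := c₀ ^ (1/(1-β)) with hMv_def
    clear_value Mv
    have hMv : 0 < Mv := hMv_def ▸ Real.rpow_pos_of_pos hpos _
    have hMvpow : Mv ^ (1-β) = c₀ := by
      rw [hMv_def, ← Real.rpow_mul hpos.le, one_div,
        inv_mul_cancel₀ (by linarith : (1:ℝ)-β ≠ 0), Real.rpow_one]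
    have hbound : ∀ t : ℝ, 0 < t → v t ≤ Mv := by
      intro t ht
      have h1 := hglobal t ht
      have h2 : 0 < (β-1)/K*t := mul_pos (div_pos hβ1 hK) ht
      have h3 : Mv ^ (1-β) < v t ^ (1-β) := by rw [hMvpow]; linarith
      exact ((Real.rpow_lt_rpow_iff_of_neg hMv (hvpos t ht) (by linarith)).1 h3).le
    have hub : ∀ t : ℝ, 0 < t → t ≤ 1 → u t ≤ u 1 + Mv := by
      intro t ht ht1
      have hmvt := norm_image_sub_le_of_norm_deriv_le_segment'
        (f := u) (f' := deriv u) (a := t) (b := 1) (C := Mv)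
        (fun x hx => (hu_diff x (lt_of_lt_of_le ht hx.1)).hasDerivWithinAt)
        (fun x hx => by
          have hx0 : 0 < x := lt_of_lt_of_le ht hx.1
          have : ‖deriv u x‖ = v x := by
            rw [Real.norm_eq_abs, abs_of_nonpos (hmono x hx0)]
          rw [this]
          exact hbound x hx0) 1 (Set.right_mem_Icc.2 ht1)
      rw [Real.norm_eq_abs] at hmvt
      have h4 : Mv * (1 - t) ≤ Mv * 1 := by
        apply mul_le_mul_of_nonneg_left _ hMv.le
        linarith
      have h5 := abs_le.1 hmvt
      nlinarith [h5.1, h5.2]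
    have h1 : ∀ᶠ x in nhdsWithin 0 (Set.Ioi 0), u x ≤ u 1 + Mv := by
      have hx1 : ∀ᶠ x in nhdsWithin (0:ℝ) (Set.Ioi 0), x ∈ Set.Iio 1 :=
        Filter.eventually_of_mem (nhdsWithin_le_nhds (Iio_mem_nhds one_pos)) (fun x hx => hx)
      have hx2 : ∀ᶠ x in nhdsWithin (0:ℝ) (Set.Ioi (0:ℝ)), x ∈ Set.Ioi 0 :=
        eventually_mem_nhdsWithin
      filter_upwards [hx1, hx2] with x hxa hxb
      exact hub x hxb (le_of_lt hxa)
    have h2 : ∀ᶠ x in nhdsWithin 0 (Set.Ioi 0), u 1 + Mv + 1 ≤ u x :=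
      hblow.eventually_ge_atTop (u 1 + Mv + 1)
    obtain ⟨x, hx1, hx2⟩ := (h1.and h2).exists
    linarith
  have hc0 : c₀ = 0 := le_antisymm hc0_nonpos hc0_nonneg
  have hw_eq : ∀ t : ℝ, 0 < t → v t ^ (1-β) = (β-1)/K * t := by
    intro t ht
    have h1 := hglobal t ht
    rw [hc0] at h1
    linarith
  have hβne : (1:ℝ) - β ≠ 0 := by linarith
  have hv_eq : ∀ t : ℝ, 0 < t → v t = ((β-1)/K * t) ^ (1/(1-β)) := by
    intro t ht
    have hyp : (0:ℝ) < (β-1)/K * t := mul_pos (div_pos hβ1 hK) ht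
    apply ode_aux_rpow_base_inj (hvpos t ht) (Real.rpow_pos_of_pos hyp _) hβne
    rw [hw_eq t ht, ← Real.rpow_mul hyp.le, one_div,
      inv_mul_cancel₀ hβne, Real.rpow_one]
  constructor
  · -- case 1 < β < 2
    intro hβlt
    have h2β : (0:ℝ) < 2 - β := by linarith
    set α := (2-β)/(β-1) with hα_def
    set D := K ^ (1/(2-β)) / (β-1) with hD_def
    have hD : 0 < D := hD_def ▸ div_pos (Real.rpow_pos_of_pos hK _) hβ1
    have hαpos : 0 < α := hα_def ▸ div_pos h2β hβ1
    set A := (1/(2-β)) * D ^ α with hA_def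
    have hA : 0 < A := hA_def ▸ mul_pos (by positivity) (Real.rpow_pos_of_pos hD _)
    have hGform : ∀ t : ℝ, 0 < t →
        (1/(2-β)) * (K ^ (1/(2-β)) / ((β-1)*t)) ^ α = A * t ^ (-α) := by
      intro t ht
      rw [hA_def, hD_def, ← div_div, Real.div_rpow (by positivity) ht.le,
        Real.rpow_neg ht.le, mul_assoc, div_eq_mul_inv]
      ring
    have hGderiv : ∀ t : ℝ, 0 < t →
        HasDerivAt (fun s : ℝ => (1/(2-β)) * (K ^ (1/(2-β)) / ((β-1)*s)) ^ α)
          (A * (-α * t ^ (-α - 1))) t := by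
      intro t ht
      have h1 : HasDerivAt (fun s : ℝ => A * s ^ (-α)) (A * (-α * t ^ (-α - 1))) t :=
        (Real.hasDerivAt_rpow_const (p := -α) (Or.inl (ne_of_gt ht))).const_mul A
      apply h1.congr_of_eventuallyEq
      filter_upwards [isOpen_Ioi.mem_nhds ht] with x hx
      exact hGform x hx
    have hkey : ∀ t : ℝ, 0 < t → A * (α * t ^ (-α - 1)) = v t := by
      intro t ht
      have hxpos : 0 < A * (α * t ^ (-α - 1)) :=
        mul_pos hA (mul_pos hαpos (Real.rpow_pos_of_pos ht _))
      have hypos : (0:ℝ) < (β-1)/K * t := mul_pos (div_pos hβ1 hK) ht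
      apply ode_aux_rpow_base_inj hxpos (hvpos t ht) hβne
      rw [hw_eq t ht]
      apply ode_aux_eq_of_log_eq (Real.rpow_pos_of_pos hxpos _) hypos
      have hlogD : Real.log D = (1/(2-β)) * Real.log K - Real.log (β-1) := by
        rw [hD_def, Real.log_div (by positivity) (ne_of_gt hβ1), Real.log_rpow hK]
      have hlogα : Real.log α = Real.log (2-β) - Real.log (β-1) := by
        rw [hα_def, Real.log_div (ne_of_gt h2β) (ne_of_gt hβ1)]
      have hlogA : Real.log A = -Real.log (2-β) + α * Real.log D := by
        rw [hA_def, Real.log_mul (by positivity) (ne_of_gt (Real.rpow_pos_of_pos hD _)),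
          Real.log_rpow hD, one_div, Real.log_inv]
      rw [Real.log_rpow hxpos,
        Real.log_mul (ne_of_gt hA) (ne_of_gt (mul_pos hαpos (Real.rpow_pos_of_pos ht _))),
        Real.log_mul (ne_of_gt hαpos) (ne_of_gt (Real.rpow_pos_of_pos ht _)),
        Real.log_rpow ht, Real.log_mul (by positivity) (ne_of_gt ht),
        Real.log_div (ne_of_gt hβ1) (ne_of_gt hK),
        hlogA, hlogD, hlogα, hα_def]
      field_simp
      ring
    refine ⟨u 1 - (1/(2-β)) * (K ^ (1/(2-β)) / ((β-1)*1)) ^ α, fun t ht => ?_⟩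
    have hconst := ode_aux_const_Ioi
      (f := fun s => u s - (1/(2-β)) * (K ^ (1/(2-β)) / ((β-1)*s)) ^ α)
      (fun x hx => by
        have h1 := (hu_diff x hx).sub (hGderiv x hx)
        have h2 : deriv u x - A * (-α * x ^ (-α - 1)) = 0 := by
          have h3 := hkey x hx
          have h4 : v x = -deriv u x := rfl
          rw [h4] at h3
          linarith [h3]
        rwa [h2] at h1) ht one_pos
    linarith [hconst]
  · -- case β = 2
    intro hβeq
    subst hβeq
    have hvK : ∀ t : ℝ, 0 < t → v t = K / t := by
      intro t ht
      have h1 := hv_eq t ht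
      norm_num at h1
      rw [Real.rpow_neg_one] at h1
      rw [h1]
      field_simp
    refine ⟨u 1, fun t ht => ?_⟩
    have hconst := ode_aux_const_Ioi (f := fun s => u s + K * Real.log s)
      (fun x hx => by
        have h1 := (hu_diff x hx).add ((Real.hasDerivAt_log (ne_of_gt hx)).const_mul K)
        have h2 : deriv u x + K * x⁻¹ = 0 := by
          have h3 := hvK x hx
          have h4 : v x = -deriv u x := rfl
          rw [h4] at h3
          field_simp at h3 ⊢
          linarith [h3]
        rwa [h2] at h1) ht one_pos
    simp only [Real.log_one, mul_zero, add_zero] at hconst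
    linarith [hconst]
end

section
/- Let u : ℝ^N_+ → ℝ be continuous and suppose that for every unit vector ν = (ν′, ν_N) with ν_N < 0 and every t > 0, u(x) ≤ u(x + t·ν) for all x with x_N > -t·ν_N. Then for every unit vector ν with ν_N ≤ 0 (allowing ν_N = 0), and all x ∈ ℝ^N_+ and t > 0 with x + t·ν ∈ ℝ^N_+, one has u(x) ≤ u(x + t·ν). In particular u(x′, x_N) = u(y′, x_N) for all x′, y′ ∈ ℝ^{N-1} and x_N > 0. -/
/-!
A horizontal step `w` (with `φ w = 0`) from `x` is the limit, as `r → 0⁺`, of the strictly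
downward steps `w - r • x`; these stay admissible for small `r`, so continuity of `u` at `x + w`
passes the inequality `u x ≤ u (x + w - r • x)` to the limit. Sliding horizontally in both
directions then gives equality.
-/

open Filter Topology

theorem ContinuousAt.le_of_eventually_le_add_smul {E : Type*} [TopologicalSpace E]
    [AddCommGroup E] [Module ℝ E] [ContinuousAdd E] [ContinuousSMul ℝ E]
    {u : E → ℝ} {y : E} (hu : ContinuousAt u y) (v : E) {c : ℝ}
    (h : ∀ᶠ r in 𝓝[>] (0 : ℝ), c ≤ u (y + r • v)) : c ≤ u y := by
  have hpath : Tendsto (fun r : ℝ => y + r • v) (𝓝[>] 0) (𝓝 y) :=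
    ((continuous_const.add (continuous_id.smul continuous_const)).tendsto' 0 y
      (by simp)).mono_left nhdsWithin_le_nhds
  exact ge_of_tendsto (hu.tendsto.comp hpath) h

section Sliding

variable {E : Type*} [NormedAddCommGroup E] [NormedSpace ℝ E] (φ : StrongDual ℝ E) {u : E → ℝ}

theorem le_add_of_slide
    (hslide : ∀ ν : E, ‖ν‖ = 1 → φ ν < 0 → ∀ t : ℝ, 0 < t → ∀ x : E,
      -t * φ ν < φ x → u x ≤ u (x + t • ν))
    {w x : E} (hw : φ w < 0) (hx : -φ w < φ x) : u x ≤ u (x + w) := by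
  have hw0 : 0 < ‖w‖ := norm_pos_iff.mpr (by rintro rfl; simp at hw)
  have hν : ‖‖w‖⁻¹ • w‖ = 1 := by
    rw [norm_smul, norm_inv, norm_norm, inv_mul_cancel₀ hw0.ne']
  have hνφ : φ (‖w‖⁻¹ • w) = ‖w‖⁻¹ * φ w := by simp
  have h := hslide _ hν (by rw [hνφ]; exact mul_neg_of_pos_of_neg (inv_pos.mpr hw0) hw)
    ‖w‖ hw0 x (by rwa [hνφ, neg_mul, mul_inv_cancel_left₀ hw0.ne'])
  rwa [smul_inv_smul₀ hw0.ne'] at h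

theorem le_add_of_slide_of_nonpos
    (hcont : ContinuousOn u {x : E | 0 < φ x})
    (hslide : ∀ ν : E, ‖ν‖ = 1 → φ ν < 0 → ∀ t : ℝ, 0 < t → ∀ x : E,
      -t * φ ν < φ x → u x ≤ u (x + t • ν))
    {w x : E} (hw : φ w ≤ 0) (hx : 0 < φ x) (hxw : 0 < φ (x + w)) : u x ≤ u (x + w) := by
  have hopen : IsOpen {x : E | 0 < φ x} := isOpen_lt continuous_const φ.continuous
  refine (hcont.continuousAt (hopen.mem_nhds hxw)).le_of_eventually_le_add_smul (-x) ?_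
  filter_upwards [Ioo_mem_nhdsGT (div_pos hxw hx)] with r ⟨hr0, hr⟩
  have hφ : φ (w - r • x) = φ w - r * φ x := by simp
  have hstep : r * φ x < φ (x + w) := (lt_div_iff₀ hx).mp hr
  have h := le_add_of_slide φ hslide (w := w - r • x) (x := x)
    (by rw [hφ]; nlinarith) (by rw [hφ]; rw [map_add] at hstep; linarith)
  rwa [smul_neg, ← sub_eq_add_neg, add_sub_assoc]

theorem eq_of_slide
    (hcont : ContinuousOn u {x : E | 0 < φ x})
    (hslide : ∀ ν : E, ‖ν‖ = 1 → φ ν < 0 → ∀ t : ℝ, 0 < t → ∀ x : E,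
      -t * φ ν < φ x → u x ≤ u (x + t • ν))
    {x y : E} (hx : 0 < φ x) (hxy : φ y = φ x) : u x = u y := by
  have hy : 0 < φ y := hxy ▸ hx
  apply le_antisymm
  · simpa using le_add_of_slide_of_nonpos φ hcont hslide (w := y - x)
      (by simp [hxy]) hx (by simpa using hy)
  · simpa using le_add_of_slide_of_nonpos φ hcont hslide (w := x - y)
      (by simp [hxy]) hy (by simpa using hx)

end Sliding

/-- Passage to the limit in the sliding method: monotonicity of `u` along all
strictly downward unit directions extends, by continuity, to horizontal unit
directions, and forces `u` to be independent of the tangential variables. -/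
theorem sliding_limit (n : ℕ) (u : EuclideanSpace ℝ (Fin (n + 1)) → ℝ)
    (hcont : ContinuousOn u {x : EuclideanSpace ℝ (Fin (n + 1)) | 0 < x (Fin.last n)})
    (hslide : ∀ ν : EuclideanSpace ℝ (Fin (n + 1)), ‖ν‖ = 1 → ν (Fin.last n) < 0 →
      ∀ t : ℝ, 0 < t → ∀ x : EuclideanSpace ℝ (Fin (n + 1)),
        -t * ν (Fin.last n) < x (Fin.last n) → u x ≤ u (x + t • ν)) :
    (∀ ν : EuclideanSpace ℝ (Fin (n + 1)), ‖ν‖ = 1 → ν (Fin.last n) ≤ 0 →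
      ∀ t : ℝ, 0 < t → ∀ x : EuclideanSpace ℝ (Fin (n + 1)),
        0 < x (Fin.last n) → 0 < (x + t • ν) (Fin.last n) → u x ≤ u (x + t • ν)) ∧
    (∀ x y : EuclideanSpace ℝ (Fin (n + 1)), 0 < x (Fin.last n) →
      y (Fin.last n) = x (Fin.last n) → u x = u y) := by
  let φ := EuclideanSpace.proj (𝕜 := ℝ) (Fin.last n)
  refine ⟨fun ν _ hν t ht x hx hxt => ?_, fun x y hx hxy => eq_of_slide φ hcont hslide hx hxy⟩
  exact le_add_of_slide_of_nonpos φ hcont hslide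
    (show t * ν (Fin.last n) ≤ 0 from mul_nonpos_of_nonneg_of_nonpos ht.le hν) hx hxt
end
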